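/- The function I(y) = (2y - sin(2y))/(4 y sin²(y)) is strictly increasing on the interval (0, π). -/

import Mathlib

/-!
Substituting `t = y u` in `∫₀^y sin² t dt = (2y - sin 2y)/4` gives
`(2y - sin 2y) / (4 y sin² y) = ∫₀¹ (sin (y u) / sin y)² du`.
For fixed `u ∈ (0, 1)` the integrand is strictly increasing in `y ∈ (0, π)`: its logarithmic
derivative is `u cot (y u) - cot y`, which is positive because `x cot x` is strictly decreasing
on `(0, π)`, a consequence of `sin 2x < 2x`.
-/

open Real Set intervalIntegral

lemma strictAntiOn_mul_cos_div_sin : StrictAntiOn (fun x => x * cos x / sin x) (Ioo 0 π) := by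
  apply strictAntiOn_of_deriv_neg (convex_Ioo 0 π)
  · exact ContinuousOn.div (by fun_prop) (by fun_prop)
      fun x hx => (sin_pos_of_pos_of_lt_pi hx.1 hx.2).ne'
  · intro x hx
    rw [interior_Ioo] at hx
    have hs : 0 < sin x := sin_pos_of_pos_of_lt_pi hx.1 hx.2
    have hd : HasDerivAt (fun x => x * cos x / sin x)
        (((1 * cos x + x * -sin x) * sin x - x * cos x * cos x) / sin x ^ 2) x :=
      ((hasDerivAt_id x).mul (hasDerivAt_cos x)).div (hasDerivAt_sin x) hs.ne'
    have hnum : (1 * cos x + x * -sin x) * sin x - x * cos x * cos x = sin (2 * x) / 2 - x := by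
      rw [sin_two_mul]
      linear_combination (-x) * sin_sq_add_cos_sq x
    rw [hd.deriv, hnum]
    have hsin : sin (2 * x) < 2 * x := sin_lt (by linarith [hx.1])
    exact div_neg_of_neg_of_pos (by linarith) (by positivity)

lemma strictMonoOn_sin_mul_div_sin {u : ℝ} (hu : u ∈ Ioo 0 1) :
    StrictMonoOn (fun y => sin (y * u) / sin y) (Ioo 0 π) := by
  apply strictMonoOn_of_deriv_pos (convex_Ioo 0 π)
  · exact ContinuousOn.div (by fun_prop) (by fun_prop)
      fun y hy => (sin_pos_of_pos_of_lt_pi hy.1 hy.2).ne'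
  · intro y hy
    rw [interior_Ioo] at hy
    have hs : 0 < sin y := sin_pos_of_pos_of_lt_pi hy.1 hy.2
    have hyu : 0 < y * u := mul_pos hy.1 hu.1
    have hyu_lt : y * u < y := mul_lt_of_lt_one_right hy.1 hu.2
    have hsu : 0 < sin (y * u) := sin_pos_of_pos_of_lt_pi hyu (hyu_lt.trans hy.2)
    have hd : HasDerivAt (fun y => sin (y * u) / sin y)
        ((cos (y * u) * (1 * u) * sin y - sin (y * u) * cos y) / sin y ^ 2) y :=
      ((hasDerivAt_sin _).comp y ((hasDerivAt_id y).mul_const u)).div (hasDerivAt_sin y) hs.ne'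
    rw [hd.deriv]
    have hcot := strictAntiOn_mul_cos_div_sin ⟨hyu, hyu_lt.trans hy.2⟩ hy hyu_lt
    rw [div_lt_div_iff₀ hs hsu] at hcot
    exact div_pos (by nlinarith [hy.1]) (by positivity)

lemma integral_sin_mul_sq (y : ℝ) :
    ∫ u in (0 : ℝ)..1, sin (y * u) ^ 2 = (2 * y - sin (2 * y)) / (4 * y) := by
  rcases eq_or_ne y 0 with rfl | hy
  · simp
  rw [integral_comp_mul_left (fun x => sin x ^ 2) hy, integral_sin_sq, sin_two_mul]
  simp only [mul_zero, mul_one, sin_zero, zero_mul, smul_eq_mul]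
  field_simp
  ring

lemma integral_sq_sin_mul_div_sin (y : ℝ) :
    ∫ u in (0 : ℝ)..1, (sin (y * u) / sin y) ^ 2 = (2 * y - sin (2 * y)) / (4 * y * sin y ^ 2) := by
  simp_rw [div_pow, integral_div, integral_sin_mul_sq, div_div]

lemma strictMonoOn_integral_sq_sin_mul_div_sin :
    StrictMonoOn (fun y => ∫ u in (0 : ℝ)..1, (sin (y * u) / sin y) ^ 2) (Ioo 0 π) := by
  intro y₁ hy₁ y₂ hy₂ h
  have hlt : ∀ u ∈ Ioo (0 : ℝ) 1, (sin (y₁ * u) / sin y₁) ^ 2 < (sin (y₂ * u) / sin y₂) ^ 2 := by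
    intro u hu
    have hpos : 0 < sin (y₁ * u) / sin y₁ :=
      div_pos (sin_pos_of_pos_of_lt_pi (mul_pos hy₁.1 hu.1)
        ((mul_lt_of_lt_one_right hy₁.1 hu.2).trans hy₁.2)) (sin_pos_of_pos_of_lt_pi hy₁.1 hy₁.2)
    exact pow_lt_pow_left₀ (strictMonoOn_sin_mul_div_sin hu hy₁ hy₂ h) hpos.le two_ne_zero
  refine integral_lt_integral_of_continuousOn_of_le_of_exists_lt zero_lt_one
    (by fun_prop) (by fun_prop) ?_ ⟨1 / 2, by norm_num, hlt _ (by norm_num)⟩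
  rintro u ⟨hu0, hu1⟩
  rcases hu1.lt_or_eq with hu1 | rfl
  · exact (hlt u ⟨hu0, hu1⟩).le
  · simp [div_self (sin_pos_of_pos_of_lt_pi hy₁.1 hy₁.2).ne',
      div_self (sin_pos_of_pos_of_lt_pi hy₂.1 hy₂.2).ne']

theorem stmt_5 :
    StrictMonoOn (fun y => (2 * y - Real.sin (2 * y)) / (4 * y * Real.sin y ^ 2))
      (Set.Ioo 0 Real.pi) := by
  simpa only [integral_sq_sin_mul_div_sin] using strictMonoOn_integral_sq_sin_mul_div_sin
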